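/- For every set S ⊆ {0,1}^s × {0,1}^s, δ > 0, and k, if a₁,…,a_k and b₁,…,b_k are chosen uniformly and independently from {0,1}^s, then with probability at least 1 − 4e^{−δ²k/2} the following holds: |(1/k²)·#{(i,j) : (a_i,b_j) ∈ S} − |S|/2^{2s}| < δ. Consequently, if N_out distinct outcome-triples are tracked and 4e^{−δ²k/2}·N_in·N_out < 1 where N_in is the number of input pairs, there exists a single choice of a₁,…,a_k, b₁,…,b_k such that the sampled probability of every tracked event is within δ of the true probability simultaneously. -/

import Mathlib

/-!
Hoeffding's inequality for the uniform measure on `Fin k → α` shows that the empirical mean of a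
`[0, 1]`-valued function along a uniform sample `v : Fin k → α` misses the true mean by `ε` for at
most `2 e^{-2ε²k} |α|^k` samples. The empirical density of `S` along `(a, b)` is compared with the
true density through the averaged rows `y ↦ 𝔼ᵢ 1_S(aᵢ, y)`: the sample `a` has to estimate the
row densities `x ↦ 𝔼_y 1_S(x, y)` to within `δ/2`, and then, for that fixed `a`, the sample `b`
has to estimate the averaged row to within `δ/2`. Each step fails for at most a `2e^{-δ²k/2}`
fraction of the samples, and a union bound over the tracked events leaves a common good sample.
-/

open Finset Real MeasureTheory ProbabilityTheory
open scoped BigOperators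

section Hoeffding

variable {α : Type*} [Fintype α] [MeasurableSpace α] [MeasurableSingletonClass α]

lemma integral_uniformOn_univ (f : α → ℝ) :
    ∫ a, f a ∂(uniformOn (Set.univ : Set α)) = 𝔼 a, f a := by
  rw [integral_fintype .of_finite, expect_eq_sum_div_card, sum_div]
  congr 1 with a
  simp [measureReal_def, uniformOn_univ, div_eq_inv_mul]

lemma measureReal_uniformOn_univ (P : α → Prop) [DecidablePred P] :
    (uniformOn (Set.univ : Set α)).real {a | P a} = #{a | P a} / Fintype.card α := by
  rw [measureReal_def, uniformOn_univ, ← coe_filter_univ, Measure.count_apply_finset]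
  simp [ENNReal.toReal_div]

variable [Nonempty α]

lemma hasSubgaussianMGF_uniformOn_sub_expect {f : α → ℝ} (hf : ∀ a, f a ∈ Set.Icc 0 1) :
    HasSubgaussianMGF (fun a => f a - 𝔼 b, f b) (1 / 4) (uniformOn (Set.univ : Set α)) := by
  have h := hasSubgaussianMGF_of_mem_Icc (μ := uniformOn (Set.univ : Set α)) (X := f)
    (measurable_of_finite f).aemeasurable (ae_of_all _ hf)
  rw [integral_uniformOn_univ] at h
  convert h using 1
  ext
  norm_num

lemma measureReal_sum_sub_expect_ge_le {f : α → ℝ} (hf : ∀ a, f a ∈ Set.Icc 0 1) (k : ℕ)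
    {ε : ℝ} (hε : 0 ≤ ε) :
    (uniformOn (Set.univ : Set (Fin k → α))).real {v | ε ≤ ∑ i, (f (v i) - 𝔼 b, f b)}
      ≤ exp (-2 * ε ^ 2 / k) := by
  have hpi : uniformOn (Set.univ : Set (Fin k → α)) = Measure.pi fun _ => uniformOn Set.univ := by
    rw [← uniformOn_pi, Set.pi_univ]
  have hsubG (i : Fin k) : HasSubgaussianMGF (fun v : Fin k → α => f (v i) - 𝔼 b, f b) (1 / 4)
      (Measure.pi fun _ => uniformOn Set.univ) := by
    refine HasSubgaussianMGF.of_map (Y := fun v : Fin k → α => v i)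
      (X := fun a : α => f a - 𝔼 b, f b) (measurable_pi_apply i).aemeasurable ?_
    rw [(measurePreserving_eval _ i).map_eq]
    exact hasSubgaussianMGF_uniformOn_sub_expect hf
  have hindep := iIndepFun_pi (μ := fun _ : Fin k => uniformOn (Set.univ : Set α))
    (X := fun _ a => f a - 𝔼 b, f b) fun _ => (measurable_of_finite _).aemeasurable
  rw [hpi]
  refine (HasSubgaussianMGF.measure_sum_ge_le_of_iIndepFun hindep (fun i _ => hsubG i)
    hε).trans_eq ?_
  congr 1
  rw [sum_const, card_univ, Fintype.card_fin, nsmul_eq_mul]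
  push_cast
  ring

end Hoeffding

section SampleMean

variable {α : Type*} [Fintype α] [Nonempty α]

theorem card_expect_sub_expect_ge_le {f : α → ℝ} (hf : ∀ a, f a ∈ Set.Icc 0 1) {k : ℕ}
    (hk : 0 < k) {ε : ℝ} (hε : 0 ≤ ε) :
    (#{v : Fin k → α | ε ≤ 𝔼 i, f (v i) - 𝔼 a, f a} : ℝ)
      ≤ exp (-2 * ε ^ 2 * k) * Fintype.card α ^ k := by
  let _ : MeasurableSpace α := ⊤
  have hk' : (0 : ℝ) < k := by exact_mod_cast hk
  have hsum (v : Fin k → α) :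
      ∑ i, (f (v i) - 𝔼 a, f a) = k * (𝔼 i, f (v i) - 𝔼 a, f a) := by
    rw [sum_sub_distrib, ← Fintype.card_smul_expect, mul_sub]
    simp
  have h := measureReal_sum_sub_expect_ge_le hf k (mul_nonneg hk'.le hε)
  simp only [hsum, mul_le_mul_iff_right₀ hk'] at h
  rw [measureReal_uniformOn_univ, div_le_iff₀ (by positivity)] at h
  have hexp : -2 * (k * ε) ^ 2 / k = -2 * ε ^ 2 * k := by
    rw [div_eq_iff hk'.ne']
    ring
  rwa [hexp, Fintype.card_fun, Fintype.card_fin, Nat.cast_pow] at h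

theorem card_abs_expect_sub_expect_ge_le {f : α → ℝ} (hf : ∀ a, f a ∈ Set.Icc 0 1) {k : ℕ}
    (hk : 0 < k) {ε : ℝ} (hε : 0 ≤ ε) :
    (#{v : Fin k → α | ε ≤ |𝔼 i, f (v i) - 𝔼 a, f a|} : ℝ)
      ≤ 2 * exp (-2 * ε ^ 2 * k) * Fintype.card α ^ k := by
  classical
  have : Nonempty (Fin k) := ⟨⟨0, hk⟩⟩
  -- the lower tail of `f` is the upper tail of `1 - f`
  have hf' (a : α) : 1 - f a ∈ Set.Icc 0 1 := by grind
  have hneg (v : Fin k → α) :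
      𝔼 i, (1 - f (v i)) - 𝔼 a, (1 - f a) = -(𝔼 i, f (v i) - 𝔼 a, f a) := by
    simp only [expect_sub_distrib, Fintype.expect_const]
    ring
  have hsplit : ({v : Fin k → α | ε ≤ |𝔼 i, f (v i) - 𝔼 a, f a|} : Finset _) ⊆
      ({v : Fin k → α | ε ≤ 𝔼 i, f (v i) - 𝔼 a, f a} : Finset _) ∪
        ({v : Fin k → α | ε ≤ 𝔼 i, (1 - f (v i)) - 𝔼 a, (1 - f a)} : Finset _) := by
    intro v
    simp only [mem_filter_univ, mem_union, hneg]
    exact le_abs.mp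
  calc (#{v : Fin k → α | ε ≤ |𝔼 i, f (v i) - 𝔼 a, f a|} : ℝ)
      ≤ #{v : Fin k → α | ε ≤ 𝔼 i, f (v i) - 𝔼 a, f a}
        + #{v : Fin k → α | ε ≤ 𝔼 i, (1 - f (v i)) - 𝔼 a, (1 - f a)} := by
        exact_mod_cast (card_le_card hsplit).trans (card_union_le _ _)
    _ ≤ _ := by
        linarith [card_expect_sub_expect_ge_le hf hk hε, card_expect_sub_expect_ge_le hf' hk hε]

end SampleMean

lemma expect_mem_Icc {ι : Type*} [Fintype ι] [Nonempty ι] {f : ι → ℝ} {a b : ℝ}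
    (hf : ∀ i, f i ∈ Set.Icc a b) : 𝔼 i, f i ∈ Set.Icc a b :=
  ⟨le_expect univ_nonempty fun i _ => (hf i).1, expect_le univ_nonempty fun i _ => (hf i).2⟩

lemma expect_expect_boole {ι κ : Type*} [Fintype ι] [Fintype κ] (P : ι → κ → Prop)
    [∀ i j, Decidable (P i j)] :
    𝔼 i, 𝔼 j, (if P i j then 1 else 0 : ℝ)
      = #{p : ι × κ | P p.1 p.2} / (Fintype.card ι * Fintype.card κ) := by
  rw [← expect_product', expect_eq_sum_div_card, sum_boole, card_product, card_univ, card_univ,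
    univ_product_univ]
  push_cast
  rfl

lemma card_filter_le_of_imp_mem_or {γ η : Type*} [Fintype γ] [Fintype η] [DecidableEq γ]
    [DecidableEq η] {P : γ × η → Prop} [DecidablePred P] (A : Finset γ) (B : γ → Finset η)
    (h : ∀ p, P p → p.1 ∈ A ∨ p.2 ∈ B p.1) :
    #{p | P p} ≤ #A * Fintype.card η + ∑ a, #(B a) := by
  have hsub : ({p | P p} : Finset (γ × η)) ⊆ A ×ˢ univ ∪ univ.biUnion fun a => {a} ×ˢ B a := by
    rintro ⟨a, b⟩ hp
    rcases h _ (by simpa using hp) with ha | hb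
    · exact mem_union_left _ (mem_product.mpr ⟨ha, mem_univ b⟩)
    · exact mem_union_right _ (mem_biUnion.mpr ⟨a, mem_univ a, by simpa using hb⟩)
  calc #{p | P p} ≤ #(A ×ˢ univ) + #(univ.biUnion fun a => {a} ×ˢ B a) :=
        (card_le_card hsub).trans (card_union_le _ _)
    _ ≤ #A * Fintype.card η + ∑ a, #({a} ×ˢ B a) := by
        rw [card_product, card_univ]
        exact Nat.add_le_add_left card_biUnion_le _
    _ = #A * Fintype.card η + ∑ a, #(B a) := by simp

section DoubleSample

variable {α β : Type*} [Fintype α] [Fintype β]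

lemma abs_expect_expect_sub_le {k l : ℕ} (g : α → β → ℝ) (a : Fin k → α) (b : Fin l → β) :
    |𝔼 i, 𝔼 j, g (a i) (b j) - 𝔼 x, 𝔼 y, g x y|
      ≤ |𝔼 j, 𝔼 i, g (a i) (b j) - 𝔼 y, 𝔼 i, g (a i) y|
        + |𝔼 i, 𝔼 y, g (a i) y - 𝔼 x, 𝔼 y, g x y| := by
  rw [expect_comm univ univ fun i j => g (a i) (b j),
    ← expect_comm univ univ fun i y => g (a i) y]
  exact abs_sub_le _ _ _

theorem card_abs_expect_expect_sub_ge_le [Nonempty α] [Nonempty β] {g : α → β → ℝ}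
    (hg : ∀ x y, g x y ∈ Set.Icc 0 1) {k l : ℕ} (hk : 0 < k) (hl : 0 < l) {δ : ℝ}
    (hδ : 0 ≤ δ) :
    (#{ab : (Fin k → α) × (Fin l → β) |
        δ ≤ |𝔼 i, 𝔼 j, g (ab.1 i) (ab.2 j) - 𝔼 x, 𝔼 y, g x y|} : ℝ)
      ≤ (2 * exp (-δ ^ 2 * k / 2) + 2 * exp (-δ ^ 2 * l / 2))
        * (Fintype.card α ^ k * Fintype.card β ^ l) := by
  classical
  have : Nonempty (Fin k) := ⟨⟨0, hk⟩⟩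
  have hδ2 : 0 ≤ δ / 2 := by positivity
  have hexp (n : ℕ) : -2 * (δ / 2) ^ 2 * n = -δ ^ 2 * n / 2 := by ring
  set Bad1 : Finset (Fin k → α) := {a | δ / 2 ≤ |𝔼 i, 𝔼 y, g (a i) y - 𝔼 x, 𝔼 y, g x y|}
  set Bad2 : (Fin k → α) → Finset (Fin l → β) := fun a =>
    {b | δ / 2 ≤ |𝔼 j, 𝔼 i, g (a i) (b j) - 𝔼 y, 𝔼 i, g (a i) y|}
  have hsplit (ab : (Fin k → α) × (Fin l → β))
      (hab : δ ≤ |𝔼 i, 𝔼 j, g (ab.1 i) (ab.2 j) - 𝔼 x, 𝔼 y, g x y|) :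
      ab.1 ∈ Bad1 ∨ ab.2 ∈ Bad2 ab.1 := by
    by_contra! h
    simp only [Bad1, Bad2, mem_filter_univ, not_le] at h
    linarith [abs_expect_expect_sub_le g ab.1 ab.2]
  have hBad1 : (#Bad1 : ℝ) ≤ 2 * exp (-δ ^ 2 * k / 2) * Fintype.card α ^ k := by
    simpa only [hexp] using card_abs_expect_sub_expect_ge_le
      (fun x => expect_mem_Icc fun y => hg x y) hk hδ2
  have hBad2 (a : Fin k → α) :
      (#(Bad2 a) : ℝ) ≤ 2 * exp (-δ ^ 2 * l / 2) * Fintype.card β ^ l := by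
    simpa only [hexp] using card_abs_expect_sub_expect_ge_le
      (fun y => expect_mem_Icc fun i => hg (a i) y) hl hδ2
  calc _ ≤ (#Bad1 : ℝ) * Fintype.card (Fin l → β) + ∑ a, (#(Bad2 a) : ℝ) := by
        exact_mod_cast card_filter_le_of_imp_mem_or Bad1 Bad2 hsplit
    _ ≤ 2 * exp (-δ ^ 2 * k / 2) * Fintype.card α ^ k * Fintype.card β ^ l
        + ∑ _a : Fin k → α, 2 * exp (-δ ^ 2 * l / 2) * Fintype.card β ^ l := by
        simp only [Fintype.card_fun, Fintype.card_fin, Nat.cast_pow]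
        gcongr with a
        exact hBad2 a
    _ = _ := by
        simp only [sum_const, card_univ, Fintype.card_fun, Fintype.card_fin, nsmul_eq_mul,
          Nat.cast_pow]
        ring

theorem card_abs_card_filter_div_sub_ge_le [Nonempty α] [DecidableEq α] (S : Finset (α × α))
    {k : ℕ} (hk : 0 < k) {δ : ℝ} (hδ : 0 ≤ δ) :
    (#{ab : (Fin k → α) × (Fin k → α) |
        δ ≤ |(#{ij : Fin k × Fin k | (ab.1 ij.1, ab.2 ij.2) ∈ S} : ℝ) / k ^ 2
          - #S / Fintype.card α ^ 2|} : ℝ)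
      ≤ 4 * exp (-δ ^ 2 * k / 2) * Fintype.card ((Fin k → α) × (Fin k → α)) := by
  have h := card_abs_expect_expect_sub_ge_le (g := fun x y => if (x, y) ∈ S then 1 else 0)
    (fun x y => by split_ifs <;> simp) hk hk hδ
  simp only [expect_expect_boole, Fintype.card_fin] at h
  have hcard : (Fintype.card ((Fin k → α) × (Fin k → α)) : ℝ)
      = Fintype.card α ^ k * Fintype.card α ^ k := by
    simp [Fintype.card_prod]
  rw [hcard, ← two_add_two_eq_four, add_mul]
  simpa [sq] using h

end DoubleSample

section UnionBound

variable {Ω : Type*} [Fintype Ω] [Nonempty Ω]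

lemma one_sub_le_card_subtype_div_card {Q : Ω → Prop} [DecidablePred Q] {p : ℝ}
    (h : (#{ω | ¬ Q ω} : ℝ) ≤ p * Fintype.card Ω) :
    1 - p ≤ (Nat.card {ω // Q ω} : ℝ) / Fintype.card Ω := by
  have hsplit := card_filter_add_card_filter_not (s := univ) Q
  rw [card_univ, ← Fintype.card_subtype, ← Nat.card_eq_fintype_card] at hsplit
  rw [le_div_iff₀ (by exact_mod_cast Fintype.card_pos)]
  linarith [(by exact_mod_cast hsplit :
    (Nat.card {ω // Q ω} : ℝ) + #{ω | ¬ Q ω} = Fintype.card Ω)]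

lemma exists_forall_of_card_filter_not_le {I : Type*} [Fintype I] {Q : I → Ω → Prop}
    [∀ i, DecidablePred (Q i)] {p : ℝ} (h : ∀ i, (#{ω | ¬ Q i ω} : ℝ) ≤ p * Fintype.card Ω)
    (hp : p * Fintype.card I < 1) : ∃ ω, ∀ i, Q i ω := by
  classical
  by_contra! hnone
  have hcover : (univ : Finset Ω) ⊆ univ.biUnion fun i => {ω | ¬ Q i ω} := by
    intro ω _
    obtain ⟨i, hi⟩ := hnone ω
    exact mem_biUnion.mpr ⟨i, mem_univ i, by simpa using hi⟩
  have hΩ : (0 : ℝ) < Fintype.card Ω := by exact_mod_cast Fintype.card_pos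
  have : (Fintype.card Ω : ℝ) ≤ Fintype.card I * (p * Fintype.card Ω) := by
    calc (Fintype.card Ω : ℝ) ≤ ∑ i, (#{ω | ¬ Q i ω} : ℝ) := by
          exact_mod_cast (card_le_card hcover).trans card_biUnion_le
      _ ≤ ∑ _i : I, p * Fintype.card Ω := sum_le_sum fun i _ => h i
      _ = Fintype.card I * (p * Fintype.card Ω) := by simp
  nlinarith

end UnionBound

/-- Derandomization step of Newman's theorem for private randomness. For
`S ⊆ {0,1}^s × {0,1}^s` and uniform independent samples `a₁,…,a_k`,
`b₁,…,b_k ∈ {0,1}^s`, with probability `≥ 1 − 4e^{−δ²k/2}` the empirical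
frequency of `S` is within `δ` of `|S|/2^{2s}`; consequently, for a family of
tracked events indexed by `I` with `4e^{−δ²k/2}·|I| < 1` there is a single
choice of samples good for all events simultaneously. -/
theorem newman_sampling (s k : ℕ) (hk : 0 < k) (δ : ℝ) (hδ : 0 < δ) :
    (∀ S : Finset ((Fin s → Bool) × (Fin s → Bool)),
      1 - 4 * Real.exp (-δ^2 * k / 2) ≤
        (Nat.card {ab : (Fin k → Fin s → Bool) × (Fin k → Fin s → Bool) //
            |((Finset.univ.filter fun ij : Fin k × Fin k =>
                (ab.1 ij.1, ab.2 ij.2) ∈ S).card : ℝ) / (k : ℝ)^2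
              - (S.card : ℝ) / (2 : ℝ)^(2*s)| < δ} : ℝ)
          / (Fintype.card
              ((Fin k → Fin s → Bool) × (Fin k → Fin s → Bool)) : ℝ))
    ∧ ∀ (I : Type) [Fintype I],
        ∀ S : I → Finset ((Fin s → Bool) × (Fin s → Bool)),
        4 * Real.exp (-δ^2 * k / 2) * (Fintype.card I : ℝ) < 1 →
        ∃ ab : (Fin k → Fin s → Bool) × (Fin k → Fin s → Bool),
          ∀ i : I,
            |((Finset.univ.filter fun ij : Fin k × Fin k =>
                (ab.1 ij.1, ab.2 ij.2) ∈ S i).card : ℝ) / (k : ℝ)^2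
              - ((S i).card : ℝ) / (2 : ℝ)^(2*s)| < δ := by
  classical
  have hcard : (Fintype.card (Fin s → Bool) : ℝ) ^ 2 = 2 ^ (2 * s) := by
    simp [pow_mul']
  have hbad (S : Finset ((Fin s → Bool) × (Fin s → Bool))) :=
    card_abs_card_filter_div_sub_ge_le S hk hδ.le
  simp only [hcard, ← not_lt (b := δ)] at hbad
  exact ⟨fun S => one_sub_le_card_subtype_div_card (hbad S),
    fun I _ S hI => exists_forall_of_card_filter_not_le (fun i => hbad (S i)) hI⟩
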